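/- (Theorem 1) In the QR decomposition H_eq = QR of the equivalent channel matrix of the 3D MIMO code, the upper-left 4×4 block R_11 of R is upper triangular with ⟨q_1,h_2⟩ = ⟨q_1,h_4⟩ = ⟨q_2,h_3⟩ = ⟨q_3,h_4⟩ = 0; that is, the (1,2), (1,4), (2,3) and (3,4) entries of R_11 vanish. -/

import Mathlib

noncomputable section

open scoped InnerProductSpace

namespace MIMO3D

/-- The Golden-code parameter θ = (1+√5)/2. -/
def goldenTheta : ℝ := (1 + Real.sqrt 5) / 2

/-- θ̄ = 1 − θ. -/
def goldenThetaBar : ℝ := 1 - goldenTheta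

/-- α = 1 + i(1−θ). -/
def alpha : ℂ := 1 + Complex.I * (1 - (goldenTheta : ℂ))

/-- ᾱ = 1 + i(1−θ̄). -/
def alphaBar : ℂ := 1 + Complex.I * (1 - (goldenThetaBar : ℂ))

/-- The 3D MIMO codeword matrix X(s), a 4×4 complex matrix built from the
eight information symbols s₁,…,s₈ (here 0-indexed as `s 0`,…,`s 7`). -/
def codeword (s : Fin 8 → ℂ) : Matrix (Fin 4) (Fin 4) ℂ :=
  ((Real.sqrt 5 : ℂ))⁻¹ •
  !![alpha * (s 0 + (goldenTheta : ℂ) * s 1),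
     alpha * (s 2 + (goldenTheta : ℂ) * s 3),
     -(starRingEnd ℂ alpha) * (starRingEnd ℂ (s 4) + (goldenTheta : ℂ) * starRingEnd ℂ (s 5)),
     -(starRingEnd ℂ alpha) * (starRingEnd ℂ (s 6) + (goldenTheta : ℂ) * starRingEnd ℂ (s 7));
     Complex.I * alphaBar * (s 2 + (goldenThetaBar : ℂ) * s 3),
     alphaBar * (s 0 + (goldenThetaBar : ℂ) * s 1),
     Complex.I * (starRingEnd ℂ alphaBar) * (starRingEnd ℂ (s 6) + (goldenThetaBar : ℂ) * starRingEnd ℂ (s 7)),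
     -(starRingEnd ℂ alphaBar) * (starRingEnd ℂ (s 4) + (goldenThetaBar : ℂ) * starRingEnd ℂ (s 5));
     alpha * (s 4 + (goldenTheta : ℂ) * s 5),
     alpha * (s 6 + (goldenTheta : ℂ) * s 7),
     (starRingEnd ℂ alpha) * (starRingEnd ℂ (s 0) + (goldenTheta : ℂ) * starRingEnd ℂ (s 1)),
     (starRingEnd ℂ alpha) * (starRingEnd ℂ (s 2) + (goldenTheta : ℂ) * starRingEnd ℂ (s 3));
     Complex.I * alphaBar * (s 6 + (goldenThetaBar : ℂ) * s 7),
     alphaBar * (s 4 + (goldenThetaBar : ℂ) * s 5),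
     -(Complex.I * (starRingEnd ℂ alphaBar) * (starRingEnd ℂ (s 2) + (goldenThetaBar : ℂ) * starRingEnd ℂ (s 3))),
     (starRingEnd ℂ alphaBar) * (starRingEnd ℂ (s 0) + (goldenThetaBar : ℂ) * starRingEnd ℂ (s 1))]

/-- ṽ(Y): stack the columns of the 2×4 complex matrix Y into ℂ^8
(giving (Y₁₁,Y₂₁,Y₁₂,Y₂₂,Y₁₃,Y₂₃,Y₁₄,Y₂₄)) and replace each complex entry z
by the pair (Re z, Im z), producing a vector of ℝ^16 (Euclidean space). -/
def tildeVec (Y : Matrix (Fin 2) (Fin 4) ℂ) : EuclideanSpace ℝ (Fin 16) :=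
  WithLp.toLp 2 fun m =>
    if m.val % 2 = 0 then
      (Y ⟨m.val % 4 / 2, by omega⟩ ⟨m.val / 4, by have := m.isLt; omega⟩).re
    else
      (Y ⟨m.val % 4 / 2, by omega⟩ ⟨m.val / 4, by have := m.isLt; omega⟩).im

/-- Recover the complex symbol vector s ∈ ℂ^8 from its real coordinate vector
s̃ = (Re s₁, Im s₁, …, Re s₈, Im s₈) ∈ ℝ^16. -/
def sOfReal (v : Fin 16 → ℝ) : Fin 8 → ℂ :=
  fun k => (v ⟨2 * k.val, by have := k.isLt; omega⟩ : ℂ)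
    + (v ⟨2 * k.val + 1, by have := k.isLt; omega⟩ : ℂ) * Complex.I

/-- The j-th column h_j (0-indexed: `hcol H j` is h_{j+1} of the paper) of the
equivalent channel matrix H_eq: the image of the j-th standard basis vector of
ℝ^16 under the ℝ-linear map s̃ ↦ ṽ(H · X(s)). -/
def hcol (H : Matrix (Fin 2) (Fin 4) ℂ) (j : Fin 16) : EuclideanSpace ℝ (Fin 16) :=
  tildeVec (H * codeword (sOfReal (Pi.single j 1)))

/-- The Gram–Schmidt residual r_j (0-indexed) of the columns of H_eq:
r_j = h_j − Σ_{k<j} ⟨q_k, h_j⟩ q_k. -/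
def rvec (H : Matrix (Fin 2) (Fin 4) ℂ) (j : Fin 16) : EuclideanSpace ℝ (Fin 16) :=
  have : WellFoundedLT (Fin 16) := inferInstance
  InnerProductSpace.gramSchmidt ℝ (hcol H) j

/-- The Gram–Schmidt orthonormalization q_j = r_j / ‖r_j‖ (0-indexed). -/
def qvec (H : Matrix (Fin 2) (Fin 4) ℂ) (j : Fin 16) : EuclideanSpace ℝ (Fin 16) :=
  have : WellFoundedLT (Fin 16) := inferInstance
  InnerProductSpace.gramSchmidtNormed ℝ (hcol H) j

end MIMO3D

open MIMO3D

/-!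
For symbols supported on `s₁, s₂` the codeword is diagonal,
`diag(α u, ᾱ v, conj (α u), conj (ᾱ v)) / √5` with `u = s₁ + θ s₂`, `v = s₁ + θ̄ s₂`,
and `θ, θ̄` are real. For diagonal `X, X'` one has
`⟪ṽ(H X), ṽ(H X')⟫ = ∑ |H r c|² ⟪X c c, X' c c⟫`, so a column coming from a real part
(`u, v` real) is orthogonal to one coming from an imaginary part (`u, v` imaginary), whatever
`H` is: `h₁ ⊥ h₂`, `h₁ ⊥ h₄`, `h₂ ⊥ h₃`, `h₃ ⊥ h₄`. Gram–Schmidt carries these over to the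
`q`'s, since `⟪r n, v⟫ = ⟪h n, v⟫ - ∑_{i<n} (⟪r i, h n⟫ / ‖r i‖²) ⟪r i, v⟫`: for the four
pairs `(n, v)` in question, each term of the sum has a factor that vanishes by an earlier pair.
-/

open ComplexConjugate Matrix

theorem Complex.real_inner_mul_left (z w w' : ℂ) :
    ⟪z * w, z * w'⟫_ℝ = Complex.normSq z * ⟪w, w'⟫_ℝ := by
  simp only [Complex.inner, map_mul]
  rw [show z * w' * (conj z * conj w) = (Complex.normSq z : ℂ) * (w' * conj w) by
    rw [← Complex.mul_conj]; ring, Complex.re_ofReal_mul]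

theorem Complex.real_inner_conj (w w' : ℂ) : ⟪conj w, conj w'⟫_ℝ = ⟪w, w'⟫_ℝ := by
  rw [Complex.inner, Complex.inner, Complex.conj_conj, ← Complex.conj_re, map_mul,
    Complex.conj_conj, mul_comm]

namespace InnerProductSpace

variable {𝕜 E ι : Type*} [RCLike 𝕜] [NormedAddCommGroup E] [InnerProductSpace 𝕜 E]
  [LinearOrder ι] [LocallyFiniteOrderBot ι] [WellFoundedLT ι]

theorem inner_gramSchmidt_eq_zero {f : ι → E} {n : ι} {v : E} (hn : ⟪f n, v⟫_𝕜 = 0)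
    (h : ∀ i < n, ⟪gramSchmidt 𝕜 f i, f n⟫_𝕜 = 0 ∨ ⟪gramSchmidt 𝕜 f i, v⟫_𝕜 = 0) :
    ⟪gramSchmidt 𝕜 f n, v⟫_𝕜 = 0 := by
  rw [gramSchmidt_def, inner_sub_left, hn, zero_sub, neg_eq_zero, sum_inner]
  refine Finset.sum_eq_zero fun i hi => ?_
  rw [Submodule.starProjection_singleton, inner_smul_left]
  rcases h i (Finset.mem_Iio.1 hi) with h | h <;> simp [h]

theorem inner_gramSchmidtNormed_eq_zero {f : ι → E} {n : ι} {v : E}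
    (h : ⟪gramSchmidt 𝕜 f n, v⟫_𝕜 = 0) : ⟪gramSchmidtNormed 𝕜 f n, v⟫_𝕜 = 0 := by
  rw [gramSchmidtNormed, inner_smul_left, h, mul_zero]

end InnerProductSpace

namespace MIMO3D

theorem inner_tildeVec (Y Z : Matrix (Fin 2) (Fin 4) ℂ) :
    ⟪tildeVec Y, tildeVec Z⟫_ℝ = ∑ r, ∑ c, ⟪Y r c, Z r c⟫_ℝ := by
  simp only [tildeVec, PiLp.inner_apply, Complex.inner, Fin.sum_univ_succ, Fin.sum_univ_zero,
    Fin.isValue, Fin.coe_ofNat_eq_mod, Nat.zero_mod, ↓reduceIte, Nat.zero_div, Fin.zero_eta,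
    RCLike.inner_apply, Real.ringHom_apply, Fin.succ_zero_eq_one, Nat.one_mod, Nat.mod_succ,
    one_ne_zero, Nat.reduceDiv, Fin.succ_one_eq_two, Nat.reduceMod, Nat.mod_self, Order.lt_two_iff,
    zero_le, Nat.div_self, Fin.mk_one, Fin.reduceSucc, Nat.ofNat_pos, Fin.reduceFinMk, add_zero,
    Complex.mul_re, Complex.conj_re, Complex.conj_im, mul_neg, sub_neg_eq_add]
  ring

def codewordDiag (u v : ℂ) : Fin 4 → ℂ :=
  (Real.sqrt 5 : ℂ)⁻¹ • ![alpha * u, alphaBar * v, conj (alpha * u), conj (alphaBar * v)]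

theorem codeword_eq_diagonal {s : Fin 8 → ℂ} (hs : ∀ k : Fin 8, 2 ≤ k.val → s k = 0) :
    codeword s =
      diagonal (codewordDiag (s 0 + goldenTheta * s 1) (s 0 + goldenThetaBar * s 1)) := by
  have h2 := hs 2 (by decide); have h3 := hs 3 (by decide); have h4 := hs 4 (by decide)
  have h5 := hs 5 (by decide); have h6 := hs 6 (by decide); have h7 := hs 7 (by decide)
  ext i j
  fin_cases i <;> fin_cases j <;>
    simp [codeword, codewordDiag, h2, h3, h4, h5, h6, h7, map_add, map_mul]

theorem inner_tildeVec_mul_diagonal (H : Matrix (Fin 2) (Fin 4) ℂ) {d e : Fin 4 → ℂ}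
    (h : ∀ c, ⟪d c, e c⟫_ℝ = 0) :
    ⟪tildeVec (H * diagonal d), tildeVec (H * diagonal e)⟫_ℝ = 0 := by
  rw [inner_tildeVec]
  refine Finset.sum_eq_zero fun r _ => Finset.sum_eq_zero fun c _ => ?_
  rw [mul_diagonal, mul_diagonal, Complex.real_inner_mul_left, h c, mul_zero]

theorem inner_codewordDiag {u v u' v' : ℂ} (hu : ⟪u, u'⟫_ℝ = 0) (hv : ⟪v, v'⟫_ℝ = 0) (c : Fin 4) :
    ⟪codewordDiag u v c, codewordDiag u' v' c⟫_ℝ = 0 := by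
  fin_cases c <;>
    simp only [codewordDiag, Pi.smul_apply, smul_eq_mul, Fin.zero_eta, Fin.mk_one, Fin.reduceFinMk,
      Fin.isValue, cons_val_zero, cons_val_one, cons_val, Complex.real_inner_mul_left,
      Complex.real_inner_conj, hu, hv, mul_zero]

theorem sOfReal_single_eq_zero {j : Fin 16} {k : Fin 8} (hj : j.val < 2 * k.val) :
    sOfReal (Pi.single j 1) k = 0 := by
  simp only [sOfReal, Pi.single_apply, Fin.ext_iff]
  rw [if_neg (by omega), if_neg (by omega)]
  simp

theorem re_sOfReal (v : Fin 16 → ℝ) (k : Fin 8) : (sOfReal v k).re = v ⟨2 * k.val, by omega⟩ := by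
  simp [sOfReal]

theorem im_sOfReal (v : Fin 16 → ℝ) (k : Fin 8) :
    (sOfReal v k).im = v ⟨2 * k.val + 1, by omega⟩ := by
  simp [sOfReal]

theorem im_sOfReal_single {j : Fin 16} (hj : Even j.val) (k : Fin 8) :
    (sOfReal (Pi.single j 1) k).im = 0 := by
  obtain ⟨m, hm⟩ := hj
  rw [im_sOfReal, Pi.single_eq_of_ne]
  simp only [Ne, Fin.ext_iff]
  omega

theorem re_sOfReal_single {j : Fin 16} (hj : Odd j.val) (k : Fin 8) :
    (sOfReal (Pi.single j 1) k).re = 0 := by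
  obtain ⟨m, hm⟩ := hj
  rw [re_sOfReal, Pi.single_eq_of_ne]
  simp only [Ne, Fin.ext_iff]
  omega

theorem inner_hcol_eq_zero (H : Matrix (Fin 2) (Fin 4) ℂ) {a b : Fin 16} (ha : a.val < 4)
    (hb : b.val < 4) (ha' : Even a.val) (hb' : Odd b.val) : ⟪hcol H a, hcol H b⟫_ℝ = 0 := by
  have key : ∀ t : ℝ, ⟪sOfReal (Pi.single a 1) 0 + t * sOfReal (Pi.single a 1) 1,
      sOfReal (Pi.single b 1) 0 + t * sOfReal (Pi.single b 1) 1⟫_ℝ = 0 := fun t => by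
    simp [Complex.inner, im_sOfReal_single ha', re_sOfReal_single hb']
  rw [hcol, hcol, codeword_eq_diagonal fun k hk => sOfReal_single_eq_zero (by omega),
    codeword_eq_diagonal fun k hk => sOfReal_single_eq_zero (by omega)]
  exact inner_tildeVec_mul_diagonal H (inner_codewordDiag (key _) (key _))

end MIMO3D

open InnerProductSpace

theorem stmt2_general (H : Matrix (Fin 2) (Fin 4) ℂ) :
    (∀ j k : Fin 16, j.val < 4 → k < j → ⟪qvec H j, hcol H k⟫_ℝ = 0) ∧
    ⟪qvec H 0, hcol H 1⟫_ℝ = 0 ∧ ⟪qvec H 0, hcol H 3⟫_ℝ = 0 ∧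
    ⟪qvec H 1, hcol H 2⟫_ℝ = 0 ∧ ⟪qvec H 2, hcol H 3⟫_ℝ = 0 := by
  have h01 := inner_hcol_eq_zero H (a := 0) (b := 1) (by decide) (by decide) (by decide) (by decide)
  have h03 := inner_hcol_eq_zero H (a := 0) (b := 3) (by decide) (by decide) (by decide) (by decide)
  have h21 := inner_hcol_eq_zero H (a := 2) (b := 1) (by decide) (by decide) (by decide) (by decide)
  have h23 := inner_hcol_eq_zero H (a := 2) (b := 3) (by decide) (by decide) (by decide) (by decide)
  have g01 : ⟪gramSchmidt ℝ (hcol H) 0, hcol H 1⟫_ℝ = 0 :=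
    inner_gramSchmidt_eq_zero h01 fun i hi => absurd hi (Fin.not_lt_zero i)
  have g03 : ⟪gramSchmidt ℝ (hcol H) 0, hcol H 3⟫_ℝ = 0 :=
    inner_gramSchmidt_eq_zero h03 fun i hi => absurd hi (Fin.not_lt_zero i)
  have g12 : ⟪gramSchmidt ℝ (hcol H) 1, hcol H 2⟫_ℝ = 0 :=
    inner_gramSchmidt_eq_zero ((real_inner_comm _ _).trans h21) fun i hi => by
      obtain rfl : i = 0 := by omega
      exact .inl g01
  have g23 : ⟪gramSchmidt ℝ (hcol H) 2, hcol H 3⟫_ℝ = 0 :=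
    inner_gramSchmidt_eq_zero h23 fun i hi => by
      obtain rfl | rfl : i = 0 ∨ i = 1 := by omega
      exacts [.inr g03, .inl g12]
  exact ⟨fun j k _ hkj => inner_gramSchmidtNormed_eq_zero (gramSchmidt_inv_triangular ℝ _ hkj),
    inner_gramSchmidtNormed_eq_zero g01, inner_gramSchmidtNormed_eq_zero g03,
    inner_gramSchmidtNormed_eq_zero g12, inner_gramSchmidtNormed_eq_zero g23⟩

/-- Theorem 1: In the QR decomposition H_eq = QR, the upper-left
4×4 block R₁₁ of R is upper triangular (first conjunct: ⟨q_j,h_k⟩ = 0 for k < j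
within the block) with ⟨q₁,h₂⟩ = ⟨q₁,h₄⟩ = ⟨q₂,h₃⟩ = ⟨q₃,h₄⟩ = 0 (0-indexed here). -/
theorem stmt2 (H : Matrix (Fin 2) (Fin 4) ℂ) (hLI : LinearIndependent ℝ (hcol H)) :
    (∀ j k : Fin 16, j.val < 4 → k < j → ⟪qvec H j, hcol H k⟫_ℝ = 0) ∧
    ⟪qvec H 0, hcol H 1⟫_ℝ = 0 ∧ ⟪qvec H 0, hcol H 3⟫_ℝ = 0 ∧
    ⟪qvec H 1, hcol H 2⟫_ℝ = 0 ∧ ⟪qvec H 2, hcol H 3⟫_ℝ = 0 :=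
  stmt2_general H
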